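/- arXiv:1403.2463 — 4 statements merged into one kernel-verified Lean document; each statement's English description precedes it below -/
import Mathlib

section
/- Let s, χ ∈ ℂ be nonzero with χ ≠ -1. Define the vectors in ℂ¹⁰: R₁ = (1/(16χ(1+χ)s³))·(-1, 1+χ, -χ, -1, 1+χ, -χ, 1+χ, -χ, 1+χ, -χ), R₂ = (1/(32s²))·(0,1,-1,0,1,-1,0,0,0,0), M₁ = 2χ(1+χ)s³·(-2,1,1,-2,1,1,1,1,1,1), and M₂ = 4s²·(2(1+2χ), 1-2χ, -3-2χ, 2(1+2χ), 1-2χ, -3-2χ, 1-2χ, -3-2χ, 1-2χ, -3-2χ). Then M₁·R₁ = 1, M₁·R₂ = 0, M₂·R₁ = 0, M₂·R₂ = 1. -/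
open Matrix

/-- The nonplanar double box master contours `M₁, M₂` project onto the two master
integrals: `Mᵢ ⬝ᵥ Rⱼ = δᵢⱼ`. -/
theorem xbox_master_projectors (s χ : ℂ) (hs : s ≠ 0) (hχ : χ ≠ 0) (hχ1 : χ ≠ -1)
    (R₁ R₂ M₁ M₂ : Fin 10 → ℂ)
    (hR₁ : R₁ = (16 * χ * (1 + χ) * s ^ 3)⁻¹ •
      ![-1, 1 + χ, -χ, -1, 1 + χ, -χ, 1 + χ, -χ, 1 + χ, -χ])
    (hR₂ : R₂ = (32 * s ^ 2)⁻¹ • ![0, 1, -1, 0, 1, -1, 0, 0, 0, 0])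
    (hM₁ : M₁ = (2 * χ * (1 + χ) * s ^ 3) • ![-2, 1, 1, -2, 1, 1, 1, 1, 1, 1])
    (hM₂ : M₂ = (4 * s ^ 2) • ![2 * (1 + 2 * χ), 1 - 2 * χ, -3 - 2 * χ,
      2 * (1 + 2 * χ), 1 - 2 * χ, -3 - 2 * χ, 1 - 2 * χ, -3 - 2 * χ,
      1 - 2 * χ, -3 - 2 * χ]) :
    M₁ ⬝ᵥ R₁ = 1 ∧ M₁ ⬝ᵥ R₂ = 0 ∧ M₂ ⬝ᵥ R₁ = 0 ∧ M₂ ⬝ᵥ R₂ = 1 := by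
  have hχ1' : 1 + χ ≠ 0 := fun h => hχ1 (by linear_combination h)
  subst hR₁ hR₂ hM₁ hM₂
  refine ⟨?_, ?_, ?_, ?_⟩ <;>
  · rw [smul_dotProduct, dotProduct_smul, smul_eq_mul, smul_eq_mul]
    simp only [dotProduct, Fin.sum_univ_succ, Fin.sum_univ_zero, Matrix.cons_val_zero,
      Matrix.cons_val_one, Matrix.head_cons, Matrix.cons_val_succ, add_zero]
    field_simp
    try ring
end

section
/- Let s, χ ∈ ℂ be nonzero with χ ≠ -1. Define R = (1/(16(1+χ)χ²s⁴))·(-1, 1-χ², χ², -1, 1-χ², χ², 1-χ², χ², 1-χ², χ²) in ℂ¹⁰, and M₁ = 2χ(1+χ)s³·(-2,1,1,-2,1,1,1,1,1,1), M₂ = 4s²·(2(1+2χ), 1-2χ, -3-2χ, 2(1+2χ), 1-2χ, -3-2χ, 1-2χ, -3-2χ, 1-2χ, -3-2χ). Then M₁·R = 1/(χs) and M₂·R = -4/(χs²). -/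
open Matrix

/-- Applying the nonplanar master contours to the residue vector of
`X(2,1,…,1,0,0)` gives the reduction coefficients `1/(χs)` and `-4/(χs²)`. -/
theorem xbox_doubled_reduction (s χ : ℂ) (hs : s ≠ 0) (hχ : χ ≠ 0) (hχ1 : χ ≠ -1)
    (R M₁ M₂ : Fin 10 → ℂ)
    (hR : R = (16 * (1 + χ) * χ ^ 2 * s ^ 4)⁻¹ •
      ![-1, 1 - χ ^ 2, χ ^ 2, -1, 1 - χ ^ 2, χ ^ 2, 1 - χ ^ 2, χ ^ 2,
        1 - χ ^ 2, χ ^ 2])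
    (hM₁ : M₁ = (2 * χ * (1 + χ) * s ^ 3) • ![-2, 1, 1, -2, 1, 1, 1, 1, 1, 1])
    (hM₂ : M₂ = (4 * s ^ 2) • ![2 * (1 + 2 * χ), 1 - 2 * χ, -3 - 2 * χ,
      2 * (1 + 2 * χ), 1 - 2 * χ, -3 - 2 * χ, 1 - 2 * χ, -3 - 2 * χ,
      1 - 2 * χ, -3 - 2 * χ]) :
    M₁ ⬝ᵥ R = 1 / (χ * s) ∧ M₂ ⬝ᵥ R = -4 / (χ * s ^ 2) := by
  have h1 : (1 : ℂ) + χ ≠ 0 := by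
    intro h; apply hχ1; linear_combination h
  have hc : (16 : ℂ) * (1 + χ) * χ ^ 2 * s ^ 4 ≠ 0 :=
    mul_ne_zero (mul_ne_zero (mul_ne_zero (by norm_num) h1) (pow_ne_zero 2 hχ)) (pow_ne_zero 4 hs)
  subst hR hM₁ hM₂
  constructor
  · rw [eq_div_iff (mul_ne_zero hχ hs)]
    simp only [dotProduct, Fin.sum_univ_succ, Fin.sum_univ_zero, Pi.smul_apply,
      Matrix.cons_val_zero, Matrix.cons_val_one, Matrix.head_cons, smul_eq_mul,
      Matrix.cons_val_succ]
    linear_combination mul_inv_cancel₀ hc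
  · rw [eq_div_iff (mul_ne_zero hχ (pow_ne_zero 2 hs))]
    simp only [dotProduct, Fin.sum_univ_succ, Fin.sum_univ_zero, Pi.smul_apply,
      Matrix.cons_val_zero, Matrix.cons_val_one, Matrix.head_cons, smul_eq_mul,
      Matrix.cons_val_succ]
    linear_combination (-4 : ℂ) * mul_inv_cancel₀ hc
end

section
/- Let s, χ ∈ ℂ be nonzero with χ ≠ -1. Define R' = (1/(16(1+χ)χ³s⁵))·(-1, 1+χ³, -χ³, -1, 1+χ³, -χ³, 1+χ³, -χ³, 1+χ³, -χ³) in ℂ¹⁰, and M₁ = 2χ(1+χ)s³·(-2,1,1,-2,1,1,1,1,1,1), M₂ = 4s²·(2(1+2χ), 1-2χ, -3-2χ, 2(1+2χ), 1-2χ, -3-2χ, 1-2χ, -3-2χ, 1-2χ, -3-2χ). Then M₁·R' = 1/(χ²s²) and M₂·R' = -4(1-χ)/(χ²s³). -/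
open Matrix

/-- Applying the nonplanar master contours to the residue vector of
`X(1,…,1,3,0,0)` gives the coefficients `1/(χ²s²)` and `-4(1-χ)/(χ²s³)`. -/
theorem xbox_tripled_reduction (s χ : ℂ) (hs : s ≠ 0) (hχ : χ ≠ 0) (hχ1 : χ ≠ -1)
    (R' M₁ M₂ : Fin 10 → ℂ)
    (hR' : R' = (16 * (1 + χ) * χ ^ 3 * s ^ 5)⁻¹ •
      ![-1, 1 + χ ^ 3, -χ ^ 3, -1, 1 + χ ^ 3, -χ ^ 3, 1 + χ ^ 3, -χ ^ 3,
        1 + χ ^ 3, -χ ^ 3])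
    (hM₁ : M₁ = (2 * χ * (1 + χ) * s ^ 3) • ![-2, 1, 1, -2, 1, 1, 1, 1, 1, 1])
    (hM₂ : M₂ = (4 * s ^ 2) • ![2 * (1 + 2 * χ), 1 - 2 * χ, -3 - 2 * χ,
      2 * (1 + 2 * χ), 1 - 2 * χ, -3 - 2 * χ, 1 - 2 * χ, -3 - 2 * χ,
      1 - 2 * χ, -3 - 2 * χ]) :
    M₁ ⬝ᵥ R' = 1 / (χ ^ 2 * s ^ 2) ∧ M₂ ⬝ᵥ R' = -4 * (1 - χ) / (χ ^ 2 * s ^ 3) := by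
  have h1 : (1 : ℂ) + χ ≠ 0 := fun h => hχ1 (by linear_combination h)
  subst hR' hM₁ hM₂
  have h16 : (16 : ℂ) * (1 + χ) * χ ^ 3 * s ^ 5 ≠ 0 := by
    simp [h1, hχ, hs]
  have hd2 : χ ^ 2 * s ^ 2 ≠ 0 := by simp [hχ, hs]
  have hd3 : χ ^ 2 * s ^ 3 ≠ 0 := by simp [hχ, hs]
  constructor <;>
  · rw [dotProduct_smul, smul_dotProduct]
    simp only [dotProduct, Fin.sum_univ_succ, Finset.univ_unique, Finset.sum_singleton,
      Matrix.cons_val_zero, Matrix.cons_val_one, Matrix.head_cons, Matrix.cons_val_succ,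
      smul_eq_mul, Fin.sum_univ_zero, add_zero]
    rw [mul_left_comm, inv_mul_eq_div, mul_div_assoc', div_eq_div_iff h16 (by assumption)]
    simp only [Matrix.cons_val_fin_one]
    ring
end

section
/- Let s, χ ∈ ℂ be nonzero with χ ≠ -1. Define the vectors in ℂ¹⁰: R₁ = (1/(16χ(1+χ)s³))·(-1, 1+χ, -χ, -1, 1+χ, -χ, 1+χ, -χ, 1+χ, -χ), R = (1/(16(1+χ)χ²s⁴))·(-1, 1-χ², χ², -1, 1-χ², χ², 1-χ², χ², 1-χ², χ²), and the new contour vectors N₁ = s³·(-2(-1+2χ²), 1+2χ², -3+2χ², -2(-1+2χ²), 1+2χ², -3+2χ², 1+2χ², -3+2χ², 1+2χ², -3+2χ²), N₂ = χs⁴·(-2(1+2χ), -1+2χ, 3+2χ, -2(1+2χ), -1+2χ, 3+2χ, -1+2χ, 3+2χ, -1+2χ, 3+2χ). Then N₁·R₁ = 1, N₁·R = 0, N₂·R₁ = 0, N₂·R = 1. -/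
open Matrix

/-- The master contours `N₁, N₂` of the purely scalar basis of the nonplanar
double box satisfy `N₁ ⬝ᵥ R₁ = 1`, `N₁ ⬝ᵥ R = 0`, `N₂ ⬝ᵥ R₁ = 0`, `N₂ ⬝ᵥ R = 1`. -/
theorem xbox_scalar_basis_projectors (s χ : ℂ) (hs : s ≠ 0) (hχ : χ ≠ 0) (hχ1 : χ ≠ -1)
    (R₁ R N₁ N₂ : Fin 10 → ℂ)
    (hR₁ : R₁ = (16 * χ * (1 + χ) * s ^ 3)⁻¹ •
      ![-1, 1 + χ, -χ, -1, 1 + χ, -χ, 1 + χ, -χ, 1 + χ, -χ])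
    (hR : R = (16 * (1 + χ) * χ ^ 2 * s ^ 4)⁻¹ •
      ![-1, 1 - χ ^ 2, χ ^ 2, -1, 1 - χ ^ 2, χ ^ 2, 1 - χ ^ 2, χ ^ 2,
        1 - χ ^ 2, χ ^ 2])
    (hN₁ : N₁ = (s ^ 3) • ![-2 * (-1 + 2 * χ ^ 2), 1 + 2 * χ ^ 2, -3 + 2 * χ ^ 2,
      -2 * (-1 + 2 * χ ^ 2), 1 + 2 * χ ^ 2, -3 + 2 * χ ^ 2, 1 + 2 * χ ^ 2,
      -3 + 2 * χ ^ 2, 1 + 2 * χ ^ 2, -3 + 2 * χ ^ 2])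
    (hN₂ : N₂ = (χ * s ^ 4) • ![-2 * (1 + 2 * χ), -1 + 2 * χ, 3 + 2 * χ,
      -2 * (1 + 2 * χ), -1 + 2 * χ, 3 + 2 * χ, -1 + 2 * χ, 3 + 2 * χ,
      -1 + 2 * χ, 3 + 2 * χ]) :
    N₁ ⬝ᵥ R₁ = 1 ∧ N₁ ⬝ᵥ R = 0 ∧ N₂ ⬝ᵥ R₁ = 0 ∧ N₂ ⬝ᵥ R = 1 := by
  have h1 : (1 : ℂ) + χ ≠ 0 := by
    intro h; apply hχ1; linear_combination h
  subst hR₁ hR hN₁ hN₂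
  have hd1 : (16 : ℂ) * χ * (1 + χ) * s ^ 3 ≠ 0 := by
    exact mul_ne_zero (mul_ne_zero (mul_ne_zero (by norm_num) hχ) h1) (pow_ne_zero _ hs)
  have hd2 : (16 : ℂ) * (1 + χ) * χ ^ 2 * s ^ 4 ≠ 0 := by
    exact mul_ne_zero (mul_ne_zero (mul_ne_zero (by norm_num) h1) (pow_ne_zero _ hχ)) (pow_ne_zero _ hs)
  refine ⟨?_, ?_, ?_, ?_⟩ <;>
  · rw [dotProduct_smul, smul_eq_mul, inv_mul_eq_div, div_eq_iff (by assumption)]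
    simp [dotProduct, Fin.sum_univ_succ]
    ring
end
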